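/- The map H_Π(a,b) = (a⁴, (−2 + b + ab)/(a(1 + a − ab))) has (1, √2) as its unique fixed point with a = 1, and its Jacobian matrix at (1, √2) has eigenvalues 4 and 3 + 2√2. -/

import Mathlib

/-!
On the line `a = 1` the map reads `b ↦ (2b - 2)/(2 - b)`, whose fixed points solve `b² = 2`.
Since the first component `a⁴` does not depend on `b`, the Jacobian is lower triangular, with
diagonal entries `4` and `∂_b = 2/(2 - b)²`, which equals `3 + 2√2` at `b = √2`.
-/

/-- The renormalization operator H_Π. -/
noncomputable def HPi (p : ℝ × ℝ) : ℝ × ℝ :=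
  (p.1 ^ 4, (-2 + p.2 + p.1 * p.2) / (p.1 * (1 + p.1 - p.1 * p.2)))

open Module.End

section
variable {𝕜 F : Type*} [NontriviallyNormedField 𝕜] [NormedAddCommGroup F] [NormedSpace 𝕜 F]
  {f : 𝕜 × 𝕜 → F} {L : 𝕜 × 𝕜 →L[𝕜] F} {a b : 𝕜}

theorem HasFDerivAt.hasDerivAt_comp_prodMk_left (h : HasFDerivAt f L (a, b)) :
    HasDerivAt (fun t => f (t, b)) (L (1, 0)) a :=
  h.comp_hasDerivAt a ((hasDerivAt_id a).prodMk (hasDerivAt_const a b))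

theorem HasFDerivAt.hasDerivAt_comp_prodMk_right (h : HasFDerivAt f L (a, b)) :
    HasDerivAt (fun t => f (a, t)) (L (0, 1)) b :=
  h.comp_hasDerivAt b ((hasDerivAt_const b a).prodMk (hasDerivAt_id b))
end

theorem hasEigenvalue_of_lowerTriangular_prod {K : Type*} [Field K] (L : K × K →ₗ[K] K × K)
    {α μ : K} (hαμ : α ≠ μ) (h₁ : (L (1, 0)).1 = α) (h₂ : L (0, 1) = (0, μ)) :
    HasEigenvalue L α ∧ HasEigenvalue L μ := by
  have hL : ∀ x y : K, L (x, y) = (x * α, x * (L (1, 0)).2 + y * μ) := by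
    intro x y
    have : ((x, y) : K × K) = x • (1, 0) + y • (0, 1) := by ext <;> simp
    rw [this, map_add, map_smul, map_smul, h₂, ← h₁]
    ext <;> simp
  constructor
  · refine hasEigenvalue_of_hasEigenvector (x := (α - μ, (L (1, 0)).2)) ⟨?_, ?_⟩
    · rw [mem_eigenspace_iff, hL]
      ext <;> simp <;> ring
    · simpa [Prod.ext_iff, sub_eq_zero] using fun h _ => hαμ h
  · refine hasEigenvalue_of_hasEigenvector (x := (0, 1)) ⟨?_, ?_⟩
    · rw [mem_eigenspace_iff, h₂]
      simp
    · simp [Prod.ext_iff]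

theorem HPi_one_left (b : ℝ) : HPi (1, b) = (1, (2 * b - 2) / (2 - b)) := by
  simp only [HPi]; ring_nf

theorem HPi_one_left_eq_self_iff {b : ℝ} (hb : b ≠ 2) : HPi (1, b) = (1, b) ↔ b ^ 2 = 2 := by
  have : 2 - b ≠ 0 := sub_ne_zero.mpr hb.symm
  rw [HPi_one_left, Prod.mk.injEq, div_eq_iff this]
  constructor <;> intro h
  · linear_combination h.2
  · exact ⟨rfl, by linear_combination h⟩

theorem differentiableAt_HPi {p : ℝ × ℝ} (hp : p.1 * (1 + p.1 - p.1 * p.2) ≠ 0) :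
    DifferentiableAt ℝ HPi p := by
  unfold HPi; fun_prop (disch := exact hp)

theorem hasDerivAt_HPi_one_left {b : ℝ} (hb : b ≠ 2) :
    HasDerivAt (fun t => HPi (1, t)) (0, 2 / (2 - b) ^ 2) b := by
  have : 2 - b ≠ 0 := sub_ne_zero.mpr hb.symm
  simp only [HPi_one_left]
  refine (hasDerivAt_const b 1).prodMk ?_
  exact ((((hasDerivAt_id' b).const_mul 2).sub_const 2).div
    ((hasDerivAt_id' b).const_sub 2) this).congr_deriv (by ring)

theorem hasDerivAt_HPi_fst (a b : ℝ) : HasDerivAt (fun t => (HPi (t, b)).1) (4 * a ^ 3) a := by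
  simpa [HPi] using hasDerivAt_pow 4 a

theorem two_div_two_sub_sqrt_two_sq : 2 / (2 - √2) ^ 2 = 3 + 2 * √2 := by
  have hs : √2 ^ 2 = 2 := Real.sq_sqrt zero_le_two
  have : (2 - √2) ^ 2 ≠ 0 := by nlinarith [Real.sqrt_nonneg 2]
  rw [div_eq_iff this]
  linear_combination (5 - 2 * √2) * hs

theorem HPi_fixed_point_and_eigenvalues :
    HPi (1, Real.sqrt 2) = (1, Real.sqrt 2) ∧
    (∀ b : ℝ, 1 ≤ b → b < 2 → HPi (1, b) = (1, b) → b = Real.sqrt 2) ∧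
    ∃ L : ℝ × ℝ →L[ℝ] ℝ × ℝ, HasFDerivAt HPi L (1, Real.sqrt 2) ∧
      Module.End.HasEigenvalue (L : ℝ × ℝ →ₗ[ℝ] ℝ × ℝ) 4 ∧
      Module.End.HasEigenvalue (L : ℝ × ℝ →ₗ[ℝ] ℝ × ℝ) (3 + 2 * Real.sqrt 2) := by
  have hs : √2 ^ 2 = 2 := Real.sq_sqrt zero_le_two
  have hs_ne : √2 ≠ 2 := fun h => by norm_num [h] at hs
  refine ⟨(HPi_one_left_eq_self_iff hs_ne).mpr hs, fun b hb₁ hb₂ hfix => ?_, ?_⟩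
  · rw [HPi_one_left_eq_self_iff hb₂.ne] at hfix
    rw [← hfix, Real.sqrt_sq (by linarith)]
  have hL : HasFDerivAt HPi (fderiv ℝ HPi (1, √2)) (1, √2) :=
    (differentiableAt_HPi fun h => hs_ne (by simp at h; linarith)).hasFDerivAt
  set L := fderiv ℝ HPi (1, √2)
  have hL₁ : (L (1, 0)).1 = 4 := by
    simpa using ((hasFDerivAt_fst.comp_hasDerivAt 1 hL.hasDerivAt_comp_prodMk_left).unique
      (hasDerivAt_HPi_fst 1 √2))
  have hL₂ : L (0, 1) = (0, 3 + 2 * √2) := by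
    rw [← two_div_two_sub_sqrt_two_sq]
    exact hL.hasDerivAt_comp_prodMk_right.unique (hasDerivAt_HPi_one_left hs_ne)
  refine ⟨L, hL, hasEigenvalue_of_lowerTriangular_prod (L : ℝ × ℝ →ₗ[ℝ] ℝ × ℝ) ?_ hL₁ hL₂⟩
  nlinarith [Real.sqrt_nonneg 2]
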